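/- arXiv:1211.2151 — 3 statements merged into one kernel-verified Lean document; each statement's English description precedes it below -/
import Mathlib

section
/- If a connected graph G with at least 3 vertices has a vertex u of degree 2, then G is not odometric at any vertex v ≠ u: neither edge incident to u is revealed by v, because every non-backtracking walk traversing one of these edges must traverse the other immediately after, so only the sum of the two weights can be determined. -/
open SimpleGraph

variable {V : Type*}

/-- A walk is non-backtracking if no vertex equals the vertex two steps later. -/
def NonBacktracking {G : SimpleGraph V} {u v : V} (p : G.Walk u v) : Prop :=
  ∀ i : ℕ, i + 2 < p.support.length → p.support[i]? ≠ p.support[i + 2]?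

/-- The weight of a walk: the sum of the weights of its edges, with multiplicity. -/
def walkWeight {G : SimpleGraph V} (F : Sym2 V → ℝ) {u v : V} (p : G.Walk u v) : ℝ :=
  (p.edges.map F).sum

/-- An edge `e` is revealed by a set `S` of vertices if an integer combination of weights of
closed non-backtracking walks from vertices of `S` equals a nonzero multiple of the weight
of `e`, for every weight function. -/
def RevealedBySet (G : SimpleGraph V) (S : Set V) (e : Sym2 V) : Prop :=
  ∃ (l : ℕ) (w : Fin l → V) (W : ∀ i, G.Walk (w i) (w i)) (c : Fin l → ℤ) (ce : ℤ),
    (∀ i, w i ∈ S) ∧ (∀ i, NonBacktracking (W i)) ∧ (∀ i, c i ≠ 0) ∧ ce ≠ 0 ∧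
    ∀ F : Sym2 V → ℝ, ∑ i, (c i : ℝ) * walkWeight F (W i) = (ce : ℝ) * F e

/-- A walk `W` is revealed by the vertex `v`. -/
def WalkRevealedBy (G : SimpleGraph V) (v : V) {a b : V} (W : G.Walk a b) : Prop :=
  ∃ (l : ℕ) (Ws : Fin l → G.Walk v v) (c : Fin l → ℤ) (cW : ℤ),
    (∀ i, NonBacktracking (Ws i)) ∧ (∀ i, c i ≠ 0) ∧ cW ≠ 0 ∧
    ∀ F : Sym2 V → ℝ, ∑ i, (c i : ℝ) * walkWeight F (Ws i) = (cW : ℝ) * walkWeight F W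

/-- `G` is odometric: every edge is revealed by every single vertex. -/
def Odometric (G : SimpleGraph V) : Prop :=
  ∀ v : V, ∀ e ∈ G.edgeSet, RevealedBySet G {v} e

/-- `u` is a cut vertex of `G`. -/
def IsCutVertex (G : SimpleGraph V) (u : V) : Prop :=
  G.Connected ∧ ¬ (G.induce {x : V | x ≠ u}).Connected

/-- The induced subgraph on `B` is 2-connected. -/
def TwoConnectedOn (G : SimpleGraph V) (B : Set V) : Prop :=
  3 ≤ B.ncard ∧ (G.induce B).Connected ∧ ∀ u ∈ B, (G.induce (B \ {u})).Connected

/-- `B` is a maximal 2-connected block of `G`. -/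
def IsBlock (G : SimpleGraph V) (B : Set V) : Prop :=
  TwoConnectedOn G B ∧ ∀ B', B ⊆ B' → TwoConnectedOn G B' → B' = B

/-! A walk through the degree-two vertex `u` that is non-backtracking must enter `u` along one of
its two edges and leave along the other. Hence the weight function equal to `1` on one edge at `u`,
`-1` on the other and `0` elsewhere gives weight `0` to every non-backtracking walk whose ends avoid
`u`, in particular to every closed one from `v ≠ u`, while it does not vanish on either edge at
`u`; so no integer combination of such walks can isolate an edge at `u`. -/

namespace NonBacktracking

variable {G : SimpleGraph V}

theorem of_cons {x c y : V} {h : G.Adj x c} {q : G.Walk c y}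
    (hp : NonBacktracking (q.cons h)) : NonBacktracking q := fun i hi => by
  simpa using hp (i + 1) (by simp only [Walk.support_cons, List.length_cons]; omega)

theorem ne_of_cons_cons {x c d y : V} {h : G.Adj x c} {h' : G.Adj c d} {q : G.Walk d y}
    (hp : NonBacktracking ((q.cons h').cons h)) : x ≠ d := by
  have := hp 0 (by simp only [Walk.support_cons, List.length_cons, Walk.length_support]; omega)
  rw [Walk.support_cons, Walk.support_cons, ← q.cons_tail_support] at this
  simpa using this

end NonBacktracking

theorem walkWeight_nil {G : SimpleGraph V} (F : Sym2 V → ℝ) (x : V) :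
    walkWeight F (Walk.nil : G.Walk x x) = 0 := by
  simp [walkWeight]

theorem walkWeight_cons {G : SimpleGraph V} (F : Sym2 V → ℝ) {x c y : V} (h : G.Adj x c)
    (q : G.Walk c y) : walkWeight F (q.cons h) = F s(x, c) + walkWeight F q := by
  simp [walkWeight]

theorem not_revealedBySet_of_walkWeight_eq_zero {G : SimpleGraph V} {S : Set V} {e : Sym2 V}
    (F : Sym2 V → ℝ) (hW : ∀ w ∈ S, ∀ W : G.Walk w w, NonBacktracking W → walkWeight F W = 0)
    (he : F e ≠ 0) :
    ¬ RevealedBySet G S e := by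
  rintro ⟨l, w, W, c, ce, hwS, hWnb, -, hce, hsum⟩
  have : (ce : ℝ) * F e = 0 := by
    simp [← hsum F, hW _ (hwS _) _ (hWnb _)]
  exact hce (by exact_mod_cast (mul_eq_zero.mp this).resolve_right he)

section TwoNeighbours

variable {G : SimpleGraph V} {u a b : V} (hN : ∀ c, G.Adj u c → c = a ∨ c = b)
include hN

theorem eq_or_eq_of_mem_edgeSet {e : Sym2 V} (he : e ∈ G.edgeSet) (hue : u ∈ e) :
    e = s(u, a) ∨ e = s(u, b) := by
  obtain ⟨c, rfl⟩ := Sym2.mem_iff_exists.mp hue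
  rcases hN c he with rfl | rfl
  exacts [.inl rfl, .inr rfl]

theorem walkWeight_eq_zero_of_nonBacktracking {F : Sym2 V → ℝ} (hF : ∀ e, u ∉ e → F e = 0)
    (hFab : F s(u, a) + F s(u, b) = 0) :
    ∀ {x y : V} (p : G.Walk x y), NonBacktracking p → x ≠ u → y ≠ u → walkWeight F p = 0
  | _, _, .nil, _, _, _ => walkWeight_nil F _
  | x, _, .cons h .nil, _, hx, hy => by
    rw [walkWeight_cons, walkWeight_nil, hF _ (by simp [Sym2.mem_iff, Ne.symm hx, Ne.symm hy])]
    simp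
  | x, y, .cons (v := c) h (.cons (v := d) h' q), hp, hx, hy => by
    by_cases hc : c = u
    · have hq := walkWeight_eq_zero_of_nonBacktracking hF hFab q hp.of_cons.of_cons
        (hc ▸ h'.ne.symm) hy
      have hxd : x ≠ d := hp.ne_of_cons_cons
      subst hc
      rw [walkWeight_cons, walkWeight_cons, hq, Sym2.eq_swap]
      -- `x ≠ d` forces `{x, d} = {a, b}`, so the two weights cancel
      rcases hN x h.symm with rfl | rfl <;> rcases hN d h' with rfl | rfl
      all_goals first | exact absurd rfl hxd | linarith
    · rw [walkWeight_cons, walkWeight_eq_zero_of_nonBacktracking hF hFab _ hp.of_cons hc hy,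
        hF _ (by simp [Sym2.mem_iff, Ne.symm hx, Ne.symm hc])]
      simp

theorem not_revealedBySet_of_two_neighbours {S : Set V} (hab : a ≠ b) (huS : u ∉ S)
    {e : Sym2 V} (he : e ∈ G.edgeSet) (hue : u ∈ e) : ¬ RevealedBySet G S e := by
  classical
  have hba : s(u, b) ≠ s(u, a) := fun h => hab (Sym2.congr_right.mp h).symm
  let F : Sym2 V → ℝ := fun e => if e = s(u, a) then 1 else if e = s(u, b) then -1 else 0
  have hF : ∀ e, u ∉ e → F e = 0 := fun e hue => by
    have hea : e ≠ s(u, a) := by rintro rfl; simp at hue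
    have heb : e ≠ s(u, b) := by rintro rfl; simp at hue
    simp [F, hea, heb]
  have hFab : F s(u, a) + F s(u, b) = 0 := by simp [F, hba]
  refine not_revealedBySet_of_walkWeight_eq_zero F (fun w hw W hW => ?_) ?_
  · have hwu : w ≠ u := fun h => huS (h ▸ hw)
    exact walkWeight_eq_zero_of_nonBacktracking hN hF hFab W hW hwu hwu
  · rcases eq_or_eq_of_mem_edgeSet hN he hue with rfl | rfl <;> simp [F, hba]

end TwoNeighbours

theorem not_odometric_of_degree_two_general {G : SimpleGraph V} [Fintype V] [DecidableRel G.Adj]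
    (u : V) (hdeg : G.degree u = 2) :
    ∀ v : V, v ≠ u →
      (¬ ∀ e ∈ G.edgeSet, RevealedBySet G {v} e) ∧
      (∀ e ∈ G.edgeSet, u ∈ e → ¬ RevealedBySet G {v} e) := by
  classical
  intro v hv
  obtain ⟨a, b, hab, hnbr⟩ := Finset.card_eq_two.mp hdeg
  have hN : ∀ c, G.Adj u c → c = a ∨ c = b := fun c hc => by
    simpa [hnbr] using (G.mem_neighborFinset u c).mpr hc
  have hnot : ∀ e ∈ G.edgeSet, u ∈ e → ¬ RevealedBySet G {v} e := fun e he hue =>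
    not_revealedBySet_of_two_neighbours hN hab (by simpa using hv.symm) he hue
  have ha : s(u, a) ∈ G.edgeSet := (G.mem_neighborFinset u a).mp (by simp [hnbr])
  exact ⟨fun h => hnot _ ha (Sym2.mem_mk_left u a) (h _ ha), hnot⟩

/-- a connected graph on at least 3 vertices with a vertex `u` of degree 2 is not
odometric at any vertex `v ≠ u`: neither edge incident to `u` is revealed by `v`. -/
theorem not_odometric_of_degree_two {G : SimpleGraph V} [Fintype V] [DecidableRel G.Adj]
    (hconn : G.Connected) (hcard : 3 ≤ Fintype.card V) (u : V) (hdeg : G.degree u = 2) :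
    ∀ v : V, v ≠ u →
      (¬ ∀ e ∈ G.edgeSet, RevealedBySet G {v} e) ∧
      (∀ e ∈ G.edgeSet, u ∈ e → ¬ RevealedBySet G {v} e) :=
  not_odometric_of_degree_two_general u hdeg
end

section
/- Let G be a connected graph with minimum degree at least 3, v a vertex of G, B a maximal 2-connected block of G, and u a cut vertex of G lying in B. Then any non-backtracking walk W from v to u is revealed by v, i.e., there are closed non-backtracking walks W_1, ..., W_l from v and nonzero integers c_W, c_1, ..., c_l such that Σ c_i F(W_i) = c_W F(W) for all edge-weight functions F. -/
open SimpleGraph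

variable {V : Type*}

/-!
Let `p` be the penultimate vertex of `W` (or `u` itself if `W` is empty). Since `u` has
degree at least 3, it has neighbours `a ≠ q` both different from `p`. Every vertex of `G - u`
keeps at least two neighbours there, so a longest path in `G - u` closes up into a
non-backtracking lollipop at `a`, and one at `q`. Going out of `u` to `a`, around the first
lollipop and back, then out to `q`, around the second and back, gives a closed
non-backtracking walk `X` at `u` whose second and penultimate vertices `a` and `q` differ
from each other and from `p`. Hence `W X W⁻¹` and `W X X W⁻¹` are closed non-backtracking
walks from `v`, and `2 F(W X W⁻¹) - F(W X X W⁻¹) = 2 F(W)`.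
-/

open Walk

section NonBacktracking

variable {G : SimpleGraph V} {a b c : V}

theorem SimpleGraph.Walk.snd_append_of_not_nil {p : G.Walk a b} (q : G.Walk b c) (hp : ¬p.Nil) :
    (p.append q).snd = p.snd := by
  have := not_nil_iff_lt_length.mp hp
  rw [snd, getVert_append', if_pos (by omega)]

theorem SimpleGraph.Walk.penultimate_append_of_not_nil (p : G.Walk a b) {q : G.Walk b c}
    (hq : ¬q.Nil) : (p.append q).penultimate = q.penultimate := by
  have := not_nil_iff_lt_length.mp hq
  rw [penultimate, penultimate, getVert_append, length_append, if_neg (by omega),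
    show p.length + q.length - 1 - p.length = q.length - 1 by omega]

theorem nonBacktracking_iff_getVert {p : G.Walk a b} :
    NonBacktracking p ↔ ∀ i, i + 2 ≤ p.length → p.getVert i ≠ p.getVert (i + 2) := by
  simp only [NonBacktracking, length_support]
  refine forall_congr' fun i => ⟨fun h hi => ?_, fun h hi => ?_⟩
  · have := h (by omega)
    rwa [← getVert_eq_support_getElem? p (by omega), ← getVert_eq_support_getElem? p hi,
      ne_eq, Option.some_inj] at this
  · rw [← getVert_eq_support_getElem? p (by omega), ← getVert_eq_support_getElem? p (by omega)]
    simpa using h (by omega)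

theorem nonBacktracking_cons_nil (h : G.Adj a b) : NonBacktracking (cons h nil) :=
  nonBacktracking_iff_getVert.mpr fun i hi => by simp at hi

theorem SimpleGraph.Walk.IsPath.nonBacktracking {p : G.Walk a b} (hp : p.IsPath) :
    NonBacktracking p :=
  nonBacktracking_iff_getVert.mpr fun i hi h => by
    have := hp.getVert_injOn (show i ≤ p.length by omega) (show i + 2 ≤ p.length by omega) h
    omega

theorem SimpleGraph.Walk.IsCycle.nonBacktracking {p : G.Walk a a} (hp : p.IsCycle) :
    NonBacktracking p :=
  nonBacktracking_iff_getVert.mpr fun i hi => by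
    simpa using hp.getVert_sub_one_ne_getVert_add_one (i := i + 1) (by omega)

theorem NonBacktracking.append {p : G.Walk a b} {q : G.Walk b c} (hp : NonBacktracking p)
    (hq : NonBacktracking q) (h : p.penultimate ≠ q.snd) : NonBacktracking (p.append q) := by
  rw [nonBacktracking_iff_getVert] at hp hq ⊢
  intro i hi
  rw [length_append] at hi
  rw [getVert_append, getVert_append]
  split_ifs with h₁ h₂
  · exact hp i (by omega)
  · obtain hi' | hi' : i + 2 = p.length ∨ i + 1 = p.length := by omega
    · have := hp i (by omega)
      rw [hi', getVert_length] at this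
      rwa [hi', Nat.sub_self, getVert_zero]
    · rwa [show i + 2 - p.length = 1 by omega, show i = p.length - 1 by omega]
  · omega
  · rw [show i + 2 - p.length = i - p.length + 2 by omega]
    exact hq _ (by omega)

theorem NonBacktracking.cons {p : G.Walk b c} (hp : NonBacktracking p) (h : G.Adj a b)
    (hne : p.snd ≠ a) : NonBacktracking (cons h p) :=
  (nonBacktracking_cons_nil h).append hp hne.symm

theorem NonBacktracking.concat {p : G.Walk a b} (hp : NonBacktracking p) (h : G.Adj b c)
    (hne : p.penultimate ≠ c) : NonBacktracking (p.concat h) :=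
  hp.append (nonBacktracking_cons_nil h) hne

theorem NonBacktracking.reverse {p : G.Walk a b} (hp : NonBacktracking p) :
    NonBacktracking p.reverse := by
  rw [nonBacktracking_iff_getVert] at hp ⊢
  intro i hi
  rw [length_reverse] at hi
  rw [getVert_reverse, getVert_reverse, show p.length - i = p.length - (i + 2) + 2 by omega]
  exact (hp _ (by omega)).symm

theorem NonBacktracking.map {V' : Type*} {G' : SimpleGraph V'} {f : G →g G'}
    (hf : Function.Injective f) {p : G.Walk a b} (hp : NonBacktracking p) :
    NonBacktracking (p.map f) := by
  rw [nonBacktracking_iff_getVert] at hp ⊢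
  intro i hi
  rw [length_map] at hi
  simpa only [getVert_map] using hf.ne (hp i hi)

theorem NonBacktracking.append_append_reverse {p : G.Walk a b} {q : G.Walk b b}
    (hp : NonBacktracking p) (hq : NonBacktracking q) (hqn : ¬q.Nil)
    (h₁ : p.penultimate ≠ q.snd) (h₂ : q.penultimate ≠ p.penultimate) :
    NonBacktracking (p.append (q.append p.reverse)) :=
  hp.append (hq.append hp.reverse (by rwa [snd_reverse]))
    (by rwa [snd_append_of_not_nil _ hqn])

end NonBacktracking

section WalkRevealedBy

variable {G : SimpleGraph V} {a b c : V}

theorem walkWeight_append (F : Sym2 V → ℝ) (p : G.Walk a b) (q : G.Walk b c) :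
    walkWeight F (p.append q) = walkWeight F p + walkWeight F q := by
  simp [walkWeight, edges_append]

theorem walkWeight_reverse (F : Sym2 V → ℝ) (p : G.Walk a b) :
    walkWeight F p.reverse = walkWeight F p := by
  simp [walkWeight, edges_reverse]

theorem NonBacktracking.walkRevealedBy {u v : V} {W : G.Walk v u} (hW : NonBacktracking W)
    {X : G.Walk u u} (hX : NonBacktracking X) (hXn : ¬X.Nil) (h₁ : W.penultimate ≠ X.snd)
    (h₂ : X.penultimate ≠ X.snd) (h₃ : X.penultimate ≠ W.penultimate) :
    WalkRevealedBy G v W := by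
  have hXXn : ¬(X.append X).Nil := by simp [nil_append_iff, hXn]
  refine ⟨2, ![W.append (X.append W.reverse), W.append ((X.append X).append W.reverse)],
    ![2, -1], 2, fun i => ?_, fun i => ?_, two_ne_zero, fun F => ?_⟩
  · fin_cases i
    · exact hW.append_append_reverse hX hXn h₁ h₃
    · exact hW.append_append_reverse (hX.append hX h₂) hXXn
        (by rwa [snd_append_of_not_nil _ hXn]) (by rwa [penultimate_append_of_not_nil _ hXn])
  · fin_cases i <;> decide
  · simp only [Fin.sum_univ_two, Matrix.cons_val_zero, Matrix.cons_val_one,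
      walkWeight_append, walkWeight_reverse]
    push_cast
    ring

end WalkRevealedBy

section Lollipop

variable {G : SimpleGraph V} {a b c : V}

theorem SimpleGraph.Walk.exists_isPath_forall_adj_mem_support [Finite V] (a : V) :
    ∃ (b : V) (P : G.Walk a b), P.IsPath ∧ ∀ c, G.Adj b c → c ∈ P.support := by
  by_contra! h
  have hlong : ∀ n, ∃ (b : V) (P : G.Walk a b), P.IsPath ∧ P.length = n := by
    intro n
    induction n with
    | zero => exact ⟨a, nil, .nil, rfl⟩
    | succ n ih =>
      obtain ⟨b, P, hP, rfl⟩ := ih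
      obtain ⟨c, hbc, hc⟩ := h b P hP
      exact ⟨c, P.concat hbc, hP.concat hc hbc, length_concat P hbc⟩
  have := Fintype.ofFinite V
  obtain ⟨b, P, hP, hlen⟩ := hlong (Fintype.card V)
  exact hP.length_lt.ne hlen

/-- The lollipop: `P` up to `c`, around the cycle `c b ⋯ c` closed by the edge `bc`, and back
along `P`. -/
theorem SimpleGraph.Walk.IsPath.exists_nonBacktracking_closed_walk [DecidableEq V]
    {P : G.Walk a b} (hP : P.IsPath) (hbc : G.Adj b c) (hc : c ∈ P.support) (hcP : c ≠ P.penultimate) :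
    ∃ L : G.Walk a a, NonBacktracking L ∧ ¬L.Nil := by
  set pre := P.takeUntil c hc
  set d := P.dropUntil c hc
  have hsplit : pre.append d = P := take_spec P hc
  have hd : d.IsPath := hP.dropUntil hc
  have hdn : ¬d.Nil := fun hn => hbc.ne hn.eq.symm
  have hcyc : (cons hbc.symm d.reverse).IsCycle := by
    refine (cons_isCycle_iff _ _).mpr ⟨hd.reverse, fun he => hcP ?_⟩
    rw [edges_reverse, List.mem_reverse, Sym2.eq_swap] at he
    rw [hd.eq_penultimate_of_mem_edges he, ← hsplit, penultimate_append_of_not_nil _ hdn]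
  have hdisj : pre.penultimate ∉ d.support.tail := by
    have hnodup := hP.support_nodup
    rw [← hsplit, support_append, List.nodup_append] at hnodup
    exact fun h => hnodup.2.2 _ (getVert_mem_support _ _) _ h rfl
  refine ⟨pre.append ((cons hbc.symm d.reverse).append pre.reverse),
    (hP.takeUntil hc).nonBacktracking.append_append_reverse hcyc.nonBacktracking not_nil_cons
      ?_ ?_, by simp [nil_append_iff]⟩
  · rw [snd_cons]
    exact fun h => hdisj (by rw [h]; exact end_mem_tail_support hdn)
  · rw [penultimate_cons_of_not_nil _ _ (by simpa using hdn), penultimate_reverse]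
    exact fun h => hdisj (by rw [← h]; exact snd_mem_tail_support hdn)

theorem SimpleGraph.exists_nonBacktracking_closed_walk [Finite V]
    (h : ∀ b a : V, ∃ c, G.Adj b c ∧ c ≠ a) (a : V) :
    ∃ L : G.Walk a a, NonBacktracking L ∧ ¬L.Nil := by
  classical
  obtain ⟨b, P, hP, hmax⟩ := exists_isPath_forall_adj_mem_support (G := G) a
  obtain ⟨c, hbc, hc⟩ := h b P.penultimate
  exact hP.exists_nonBacktracking_closed_walk hbc (hmax c hbc) hc

theorem SimpleGraph.exists_nonBacktracking_closed_walk_snd_eq_penultimate_eq [Finite V] {u : V}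
    (h : ∀ b ≠ u, ∀ a', ∃ c, G.Adj b c ∧ c ≠ a' ∧ c ≠ u) (hua : G.Adj u a) :
    ∃ C : G.Walk u u, NonBacktracking C ∧ ¬C.Nil ∧ C.snd = a ∧ C.penultimate = a := by
  have hdeg (b a' : {b | b ≠ u}) : ∃ c, (G.induce {b | b ≠ u}).Adj b c ∧ c ≠ a' := by
    obtain ⟨c, hbc, hca, hcu⟩ := h b b.2 a'
    exact ⟨⟨c, hcu⟩, hbc, fun he => hca (congrArg Subtype.val he)⟩
  obtain ⟨L, hL, hLn⟩ := exists_nonBacktracking_closed_walk hdeg ⟨a, hua.ne'⟩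
  let ι : G.induce {b | b ≠ u} ↪g G := Embedding.induce _
  have hua' : G.Adj u (ι ⟨a, hua.ne'⟩) := hua
  set L' := L.map ι.toHom
  have hL'nb : NonBacktracking L' := hL.map ι.injective
  have hL' (i : ℕ) : L'.getVert i ≠ u := by
    rw [getVert_map]
    exact (L.getVert i).2
  have hL'n : ¬L'.Nil := by rwa [nil_map_iff]
  refine ⟨cons hua' (L'.concat hua'.symm),
    (hL'nb.concat hua'.symm (hL' _)).cons hua' ?_,
    not_nil_cons, snd_cons _ _, ?_⟩
  · rw [concat_eq_append, snd_append_of_not_nil _ hL'n]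
    exact hL' 1
  · rw [penultimate_cons_of_not_nil _ _ (by simp [concat_eq_append, nil_append_iff]),
      penultimate_concat]
    rfl

end Lollipop

theorem SimpleGraph.exists_adj_ne_ne {G : SimpleGraph V} [Fintype V] [DecidableRel G.Adj] {b : V}
    (h : 3 ≤ G.degree b) (a c : V) : ∃ d, G.Adj b d ∧ d ≠ a ∧ d ≠ c := by
  classical
  have hcard : 1 < ((G.neighborFinset b).erase a).card := by
    have := Finset.pred_card_le_card_erase (s := G.neighborFinset b) (a := a)
    rw [card_neighborFinset_eq_degree] at this
    omega
  obtain ⟨d, hd, hdc⟩ := Finset.exists_mem_ne hcard c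
  rw [Finset.mem_erase, mem_neighborFinset] at hd
  exact ⟨d, hd.2, hd.1, hdc⟩

theorem walk_to_block_cutVertex_revealed_general {G : SimpleGraph V} [Fintype V] [DecidableRel G.Adj]
    (hdeg : ∀ x, 3 ≤ G.degree x)
    (v u : V) (W : G.Walk v u) (hW : NonBacktracking W) :
    WalkRevealedBy G v W := by
  have hloop {a : V} (hua : G.Adj u a) := exists_nonBacktracking_closed_walk_snd_eq_penultimate_eq
    (fun b _ a' => exists_adj_ne_ne (hdeg b) a' u) hua
  obtain ⟨a, hua, hap, -⟩ := exists_adj_ne_ne (hdeg u) W.penultimate W.penultimate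
  obtain ⟨q, huq, hqp, hqa⟩ := exists_adj_ne_ne (hdeg u) W.penultimate a
  obtain ⟨A, hA, hAn, hAs, hAp⟩ := hloop hua
  obtain ⟨Q, hQ, hQn, hQs, hQp⟩ := hloop huq
  have hX₁ : (A.append Q).snd = a := by rw [snd_append_of_not_nil _ hAn, hAs]
  have hX₂ : (A.append Q).penultimate = q := by rw [penultimate_append_of_not_nil _ hQn, hQp]
  refine hW.walkRevealedBy (hA.append hQ (by rw [hAp, hQs]; exact hqa.symm))
    (by simp [nil_append_iff, hAn]) (by rw [hX₁]; exact hap.symm) (by rw [hX₁, hX₂]; exact hqa)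
    (by rw [hX₂]; exact hqp)

/-- in a connected graph of minimum degree at least 3, any non-backtracking walk
from a vertex `v` to a cut vertex `u` of a maximal 2-connected block `B` is revealed by `v`. -/
theorem walk_to_block_cutVertex_revealed {G : SimpleGraph V} [Fintype V] [DecidableRel G.Adj]
    (hconn : G.Connected) (hdeg : ∀ x, 3 ≤ G.degree x)
    (v u : V) (B : Set V) (hB : IsBlock G B) (hu : IsCutVertex G u) (huB : u ∈ B)
    (W : G.Walk v u) (hW : NonBacktracking W) :
    WalkRevealedBy G v W :=
  walk_to_block_cutVertex_revealed_general hdeg v u W hW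
end

section
/- Let G be an odometric graph and v a vertex. If W is a finite collection of closed non-backtracking walks from v that reveals every edge of G, and W is minimal with this property (no proper subcollection reveals every edge), then |W| = |E(G)|. -/
/-!
Identify a walk with its vector of edge multiplicities in `Sym2 V → ℚ`. Since a weight identity
holding for every `F` is an identity between these vectors, and rational coefficients can be
cleared to integers, a collection `𝒲` reveals `e` exactly when the indicator of `e` lies in the
rational span of the vectors of `𝒲`. If `𝒲` reveals every edge, that span is therefore the span
of the edge indicators, of dimension `|E(G)|`; minimality says no vector of `𝒲` lies in the span
of the others, so they form a basis of it and `|𝒲| = |E(G)|`.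
-/

open SimpleGraph

variable {V : Type*}

/-- A finite collection of closed walks from `v` reveals the edge `e`. -/
def CollReveals {G : SimpleGraph V} {v : V} [DecidableEq V]
    (𝒲 : Finset (G.Walk v v)) (e : Sym2 V) : Prop :=
  ∃ (l : ℕ) (Ws : Fin l → G.Walk v v) (c : Fin l → ℤ) (ce : ℤ),
    (∀ i, Ws i ∈ 𝒲) ∧ (∀ i, c i ≠ 0) ∧ ce ≠ 0 ∧
    ∀ F : Sym2 V → ℝ, ∑ i, (c i : ℝ) * walkWeight F (Ws i) = (ce : ℝ) * F e

open Module Submodule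

theorem LinearIndepOn.finrank_span_image_finset {K M ι : Type*} [DivisionRing K]
    [AddCommGroup M] [Module K M] {f : ι → M} {s : Finset ι}
    (h : LinearIndepOn K f (s : Set ι)) :
    finrank K (span K (f '' s)) = s.card := by
  rw [Set.image_eq_range, finrank_span_eq_card h]
  simp

section IntegerCombinations

variable {α M : Type*} [AddCommGroup M]

theorem exists_zsmul_mem_span_int_of_mem_span_rat [Module ℚ M] {T : Set M} {x : M} (hx : x ∈ span ℚ T) :
    ∃ d : ℤ, d ≠ 0 ∧ d • x ∈ span ℤ T := by
  induction hx using Submodule.span_induction with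
  | mem x hx => exact ⟨1, one_ne_zero, by simpa using subset_span hx⟩
  | zero => exact ⟨1, one_ne_zero, by simp⟩
  | add x y _ _ hx hy =>
    obtain ⟨d, hd, hdx⟩ := hx
    obtain ⟨d', hd', hdy⟩ := hy
    refine ⟨d * d', mul_ne_zero hd hd', ?_⟩
    rw [smul_add, mul_comm d d', mul_smul, mul_comm d' d, mul_smul]
    exact add_mem (zsmul_mem hdx d') (zsmul_mem hdy d)
  | smul q x _ hx =>
    obtain ⟨d, hd, hdx⟩ := hx
    refine ⟨q.den * d, mul_ne_zero (by exact_mod_cast q.den_ne_zero) hd, ?_⟩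
    have : ((q.den : ℤ) * d) • q • x = q.num • d • x := by
      rw [← Int.cast_smul_eq_zsmul ℚ, ← Int.cast_smul_eq_zsmul ℚ, ← Int.cast_smul_eq_zsmul ℚ,
        smul_smul, smul_smul]
      congr 1
      push_cast
      rw [← Rat.mul_den_eq_num]
      ring
    rw [this]
    exact zsmul_mem hdx _

theorem exists_fin_combination_of_mem_span_int {φ : α → M} {s : Set α} {y : M}
    (hy : y ∈ span ℤ (φ '' s)) :
    ∃ (l : ℕ) (a : Fin l → α) (c : Fin l → ℤ),
      (∀ i, a i ∈ s) ∧ (∀ i, c i ≠ 0) ∧ ∑ i, c i • φ (a i) = y := by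
  classical
  obtain ⟨c, hc, rfl⟩ := Submodule.mem_span_set.mp hy
  choose a ha hφa using fun m : c.support => hc m.2
  let e := c.support.equivFin.symm
  refine ⟨c.support.card, fun i => a (e i), fun i => c (e i), fun i => ha _,
    fun i => Finsupp.mem_support_iff.mp (e i).2, ?_⟩
  simp only [hφa]
  rw [e.sum_comp (fun m => c m • (m : M)), Finset.sum_coe_sort c.support (fun m => c m • m)]
  rfl

end IntegerCombinations

theorem forall_sum_mul_eq_iff {α : Type*} [Fintype α] [DecidableEq α] {a b : α → ℚ} :
    (∀ F : α → ℝ, ∑ x, (a x : ℝ) * F x = ∑ x, (b x : ℝ) * F x) ↔ a = b := by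
  refine ⟨fun h => funext fun y => ?_, fun h _ => h ▸ rfl⟩
  simpa [Pi.single_apply] using h (Pi.single y 1)

namespace SimpleGraph.Walk

variable {G : SimpleGraph V} [DecidableEq V] {u w : V}

def edgeCount (p : G.Walk u w) : Sym2 V → ℚ := fun e => p.edges.count e

theorem walkWeight_eq_sum_edgeCount [Fintype V] (F : Sym2 V → ℝ) (p : G.Walk u w) :
    walkWeight F p = ∑ e, (p.edgeCount e : ℝ) * F e := by
  rw [walkWeight, Finset.sum_list_map_count]
  refine Finset.sum_subset (Finset.subset_univ _) (fun e _ he => ?_) |>.trans ?_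
  · simp [List.count_eq_zero.mpr (by simpa using he)]
  · simp [edgeCount]

theorem edgeCount_mem_span_edges [Fintype V] [DecidableRel G.Adj] (p : G.Walk u w) :
    p.edgeCount ∈ span ℚ (Pi.basisFun ℚ (Sym2 V) '' G.edgeFinset) := by
  rw [Basis.mem_span_image]
  intro e he
  have : e ∈ p.edges := by
    by_contra h
    simp [edgeCount, List.count_eq_zero.mpr h] at he
  simpa using p.edges_subset_edgeSet this

end SimpleGraph.Walk

section Revealing

variable {G : SimpleGraph V} [Fintype V] [DecidableEq V]

theorem forall_sum_walkWeight_eq_iff {ι : Type*} [Fintype ι] {u w : V} (Ws : ι → G.Walk u w)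
    (c : ι → ℤ) (ce : ℤ) (e : Sym2 V) :
    (∀ F : Sym2 V → ℝ, ∑ i, (c i : ℝ) * walkWeight F (Ws i) = (ce : ℝ) * F e) ↔
      ∑ i, c i • (Ws i).edgeCount = ce • Pi.single e 1 := by
  have hlhs : ∀ F : Sym2 V → ℝ, ∑ i, (c i : ℝ) * walkWeight F (Ws i) =
      ∑ x, ((∑ i, c i • (Ws i).edgeCount) x : ℝ) * F x := by
    intro F
    simp only [Walk.walkWeight_eq_sum_edgeCount, Finset.mul_sum, Finset.sum_apply,
      Pi.smul_apply, Rat.cast_sum, Finset.sum_mul]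
    simp only [zsmul_eq_mul, Rat.cast_mul, Rat.cast_intCast, mul_assoc]
    exact Finset.sum_comm
  have hrhs : ∀ F : Sym2 V → ℝ, (ce : ℝ) * F e =
      ∑ x, ((ce • Pi.single e 1 : Sym2 V → ℚ) x : ℝ) * F x := by
    intro F
    simp [Pi.single_apply, apply_ite, ite_mul]
  simp only [hlhs, hrhs]
  exact forall_sum_mul_eq_iff

theorem collReveals_iff_mem_span {v : V} (𝒲 : Finset (G.Walk v v)) (e : Sym2 V) :
    CollReveals 𝒲 e ↔ Pi.single e 1 ∈ span ℚ (Walk.edgeCount '' (𝒲 : Set (G.Walk v v))) := by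
  constructor
  · rintro ⟨l, Ws, c, ce, hWs, -, hce, hF⟩
    rw [forall_sum_walkWeight_eq_iff] at hF
    have hmem : ce • Pi.single e 1 ∈ span ℚ (Walk.edgeCount '' (𝒲 : Set (G.Walk v v))) :=
      hF ▸ sum_mem fun i _ => zsmul_mem (subset_span (Set.mem_image_of_mem _ (hWs i))) (c i)
    rwa [← Int.cast_smul_eq_zsmul ℚ, smul_mem_iff _ (Int.cast_ne_zero.mpr hce)] at hmem
  · intro h
    obtain ⟨d, hd, hdx⟩ := exists_zsmul_mem_span_int_of_mem_span_rat h
    obtain ⟨l, Ws, c, hWs, hc, hsum⟩ := exists_fin_combination_of_mem_span_int hdx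
    exact ⟨l, Ws, c, d, hWs, hc, hd, (forall_sum_walkWeight_eq_iff Ws c d e).mpr hsum⟩

variable {v : V} {𝒲 : Finset (G.Walk v v)}

theorem span_edgeCount_eq_span_edges [DecidableRel G.Adj]
    (hrev : ∀ e ∈ G.edgeSet, CollReveals 𝒲 e) :
    span ℚ (Walk.edgeCount '' (𝒲 : Set (G.Walk v v))) =
      span ℚ (Pi.basisFun ℚ (Sym2 V) '' G.edgeFinset) := by
  apply le_antisymm <;> rw [span_le]
  · rintro _ ⟨W, -, rfl⟩
    exact W.edgeCount_mem_span_edges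
  · rintro _ ⟨e, he, rfl⟩
    rw [SetLike.mem_coe, Pi.basisFun_apply, ← collReveals_iff_mem_span]
    exact hrev e (mem_edgeFinset.mp he)

theorem linearIndepOn_edgeCount_of_minimal (hrev : ∀ e ∈ G.edgeSet, CollReveals 𝒲 e)
    (hmin : ∀ 𝒲' : Finset (G.Walk v v), 𝒲' ⊂ 𝒲 → ¬ ∀ e ∈ G.edgeSet, CollReveals 𝒲' e) :
    LinearIndepOn ℚ Walk.edgeCount (𝒲 : Set (G.Walk v v)) := by
  rw [linearIndepOn_iff_notMem_span]
  intro W hW hWspan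
  have hspan : span ℚ (Walk.edgeCount '' ((𝒲.erase W : Finset _) : Set (G.Walk v v))) =
      span ℚ (Walk.edgeCount '' (𝒲 : Set (G.Walk v v))) := by
    conv_rhs => rw [← Finset.insert_erase hW]
    rw [Finset.coe_insert, Set.image_insert_eq, span_insert_eq_span]
    simpa using hWspan
  refine hmin (𝒲.erase W) (Finset.erase_ssubset hW) fun e he => ?_
  rw [collReveals_iff_mem_span, hspan, ← collReveals_iff_mem_span]
  exact hrev e he

end Revealing

theorem minimal_collection_card_general {G : SimpleGraph V} [Fintype V] [DecidableEq V]
    [DecidableRel G.Adj] (v : V)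
    (𝒲 : Finset (G.Walk v v))
    (hrev : ∀ e ∈ G.edgeSet, CollReveals 𝒲 e)
    (hmin : ∀ 𝒲' : Finset (G.Walk v v), 𝒲' ⊂ 𝒲 → ¬ ∀ e ∈ G.edgeSet, CollReveals 𝒲' e) :
    𝒲.card = G.edgeFinset.card := by
  calc 𝒲.card = finrank ℚ (span ℚ (Walk.edgeCount '' (𝒲 : Set (G.Walk v v)))) :=
        ((linearIndepOn_edgeCount_of_minimal hrev hmin).finrank_span_image_finset).symm
    _ = finrank ℚ (span ℚ (Pi.basisFun ℚ (Sym2 V) '' G.edgeFinset)) := by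
        rw [span_edgeCount_eq_span_edges hrev]
    _ = G.edgeFinset.card :=
        ((Pi.basisFun ℚ (Sym2 V)).linearIndependent.linearIndepOn _).finrank_span_image_finset

/-- any minimal collection of closed non-backtracking walks from `v` revealing
every edge of an odometric graph has cardinality `|E(G)|`. -/
theorem minimal_collection_card {G : SimpleGraph V} [Fintype V] [DecidableEq V]
    [DecidableRel G.Adj] (hodo : Odometric G) (v : V)
    (𝒲 : Finset (G.Walk v v)) (hNB : ∀ W ∈ 𝒲, NonBacktracking W)
    (hrev : ∀ e ∈ G.edgeSet, CollReveals 𝒲 e)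
    (hmin : ∀ 𝒲' : Finset (G.Walk v v), 𝒲' ⊂ 𝒲 → ¬ ∀ e ∈ G.edgeSet, CollReveals 𝒲' e) :
    𝒲.card = G.edgeFinset.card :=
  minimal_collection_card_general v 𝒲 hrev hmin
end
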